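/- Let 0 < k < n and 1 ≤ m < n. For every function f on the slice ([n] choose k) and every t ≥ 0, ‖H_t f − Π_T H_t f‖²_{L²} ≤ (1/(n−m)) Σ_{1 ≤ i < j ≤ n−m} ‖D_{τ_{ij}}(H_t f)‖²_{L²}, where all norms are with respect to the uniform measure on the slice. -/

import Mathlib

open Finset

/-- The slice `([n] choose k)` of the Boolean cube: points of `{0,1}ⁿ` with exactly `k` ones. -/
abbrev Slice (n k : ℕ) : Type :=
  { x : Fin n → Bool // (∑ l, (if x l then 1 else 0 : ℕ)) = k }

/-- The action of a permutation `σ` on the slice: `x^σ = (x_{σ(l)})_l`. -/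
def permAct {n k : ℕ} (σ : Equiv.Perm (Fin n)) (x : Slice n k) : Slice n k :=
  ⟨fun l => x.1 (σ l), (Fintype.sum_equiv σ _ _ fun l => rfl).trans x.2⟩

/-- `D_{τ_{ij}} f (x) = f(x^{τ_{ij}}) − f(x)`. -/
def sliceD {n k : ℕ} (i j : Fin n) (f : Slice n k → ℝ) (x : Slice n k) : ℝ :=
  f (permAct (Equiv.swap i j) x) - f x

/-- The `L¹` norm with respect to the uniform probability measure on the slice. -/
noncomputable def sliceL1 {n k : ℕ} (f : Slice n k → ℝ) : ℝ :=
  (Fintype.card (Slice n k) : ℝ)⁻¹ * ∑ x, |f x|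

/-- The square of the `L²` norm with respect to the uniform probability measure
on the slice. -/
noncomputable def sliceL2sq {n k : ℕ} (f : Slice n k → ℝ) : ℝ :=
  (Fintype.card (Slice n k) : ℝ)⁻¹ * ∑ x, (f x) ^ 2

/-- The influence `I_{τ_{ij}}(f) = ‖D_{τ_{ij}} f‖_{L¹}`. -/
noncomputable def sliceInfluence {n k : ℕ} (i j : Fin n) (f : Slice n k → ℝ) : ℝ :=
  sliceL1 (sliceD i j f)

/-- The total influence `Inf(f) = (1/n) Σ_{1 ≤ i < j ≤ n} I_{τ_{ij}}(f)`. -/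
noncomputable def sliceTotalInfluence {n k : ℕ} (f : Slice n k → ℝ) : ℝ :=
  (n : ℝ)⁻¹ * ∑ i : Fin n, ∑ j : Fin n, if i < j then sliceInfluence i j f else 0

/-- The generator `L f (x) = (2/(n(n−1))) Σ_{i<j} f(x^{τ_{ij}}) − f(x)` on the slice. -/
noncomputable def sliceGen (n k : ℕ) : (Slice n k → ℝ) →ₗ[ℝ] (Slice n k → ℝ) :=
  (2 / ((n : ℝ) * ((n : ℝ) - 1))) •
      (∑ i : Fin n, ∑ j : Fin n,
        if i < j then LinearMap.funLeft ℝ ℝ (permAct (Equiv.swap i j)) else 0) -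
    LinearMap.id

/-- `H_t = P_{(n−1)t/2}` where `P_s = e^{sL}` is the semigroup generated by `L`. -/
noncomputable def sliceH (n k : ℕ) (t : ℝ) : (Slice n k → ℝ) → (Slice n k → ℝ) :=
  fun f => NormedSpace.exp
    ((((n : ℝ) - 1) * t / 2) • (LinearMap.toContinuousLinearMap (sliceGen n k))) f

/-- `Π_T f (x) = (1/(n−m)!) Σ_{σ ∈ S_{n−m}} f(x^σ)`, the average of `f` over all
permutations of the first `n − m` coordinates. -/
noncomputable def slicePiT (n k m : ℕ) (f : Slice n k → ℝ) : Slice n k → ℝ :=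
  fun x => ((n - m).factorial : ℝ)⁻¹ *
    ∑ σ ∈ Finset.univ.filter
        (fun σ : Equiv.Perm (Fin n) => ∀ l : Fin n, n - m ≤ (l : ℕ) → σ l = l),
      f (permAct σ x)

/-!
Fixing the coordinates outside `S = {0, …, n - m - 1}` splits the slice into classes, each a copy
of the slice of `a`-subsets of `S` for some `a`, on which the transpositions inside `S` act, and
`Π_T` averages over each class. So `H_t f - Π_T H_t f` has mean zero on every class, and the claim
reduces to the Poincaré inequality of the slice, which holds for every function.

For `u` on the `a`-subsets of `S`, `r = |S|`, let `D u (s) = Σ_{i ∈ S \ s} u (s ∪ {i})` and let `U`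
be its adjoint (`upShadowSum` and `shadowSum`). The Dirichlet form of `u` equals
`2 (a (r - a + 1) ‖u‖² - ‖D u‖²)`. The commutation relation `D U - U D = r - 2a` and Cauchy–Schwarz
give, by induction on the level, `‖D u‖² ≤ (a - 1)(r - a) ‖u‖²` when `u` has mean zero; hence the
Dirichlet form is at least `2 r ‖u‖²`, twice what is claimed.
-/

lemma sum_sum_sub_sq {ι : Type*} (A : Finset ι) (x : ι → ℝ) :
    ∑ i ∈ A, ∑ j ∈ A, (x j - x i) ^ 2 =
      2 * (A.card * ∑ i ∈ A, x i ^ 2 - (∑ i ∈ A, x i) ^ 2) := by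
  simp only [sub_sq, sum_add_distrib, sum_sub_distrib, sum_const, nsmul_eq_mul, ← mul_sum,
    ← sum_mul]
  ring

section
variable {ι : Type*} [DecidableEq ι] (S : Finset ι)

def shadowSum (v : Finset ι → ℝ) (t : Finset ι) : ℝ := ∑ i ∈ t, v (t.erase i)

def upShadowSum (v : Finset ι → ℝ) (s : Finset ι) : ℝ := ∑ i ∈ S \ s, v (insert i s)

lemma sum_powersetCard_sum_sdiff (b : ℕ) (G : Finset ι → ι → ℝ) :
    ∑ s ∈ S.powersetCard b, ∑ i ∈ S \ s, G s i =
      ∑ t ∈ S.powersetCard (b + 1), ∑ i ∈ t, G (t.erase i) i := by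
  rw [sum_sigma', sum_sigma']
  refine sum_nbij' (fun p => ⟨insert p.2 p.1, p.2⟩) (fun p => ⟨p.1.erase p.2, p.2⟩)
    ?_ ?_ ?_ ?_ ?_
  · rintro ⟨s, i⟩ h
    simp only [mem_sigma, mem_powersetCard, mem_sdiff] at h ⊢
    exact ⟨⟨insert_subset h.2.1 h.1.1, by rw [card_insert_of_notMem h.2.2, h.1.2]⟩,
      mem_insert_self _ _⟩
  · rintro ⟨t, i⟩ h
    simp only [mem_sigma, mem_powersetCard, mem_sdiff] at h ⊢
    exact ⟨⟨(erase_subset _ _).trans h.1.1, by rw [card_erase_of_mem h.2, h.1.2]; rfl⟩,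
      h.1.1 h.2, notMem_erase _ _⟩
  · rintro ⟨s, i⟩ h
    simp only [mem_sigma, mem_sdiff] at h
    simp [erase_insert h.2.2]
  · rintro ⟨t, i⟩ h
    simp only [mem_sigma] at h
    simp [insert_erase h.2]
  · rintro ⟨s, i⟩ h
    simp only [mem_sigma, mem_sdiff] at h
    simp [erase_insert h.2.2]

lemma sum_upShadowSum_mul (b : ℕ) (v z : Finset ι → ℝ) :
    ∑ s ∈ S.powersetCard b, upShadowSum S v s * z s =
      ∑ t ∈ S.powersetCard (b + 1), v t * shadowSum z t := by
  simp only [upShadowSum, shadowSum, sum_mul, mul_sum]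
  rw [sum_powersetCard_sum_sdiff S b fun s i => v (insert i s) * z s]
  exact sum_congr rfl fun t _ => sum_congr rfl fun i hi => by rw [insert_erase hi]

lemma sum_upShadowSum (b : ℕ) (v : Finset ι → ℝ) :
    ∑ s ∈ S.powersetCard b, upShadowSum S v s =
      (b + 1) * ∑ t ∈ S.powersetCard (b + 1), v t := by
  have h := sum_upShadowSum_mul S b v 1
  simp only [Pi.one_apply, mul_one, shadowSum, sum_const, nsmul_eq_mul] at h
  rw [h, mul_sum]
  refine sum_congr rfl fun t ht => ?_
  rw [(mem_powersetCard.1 ht).2]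
  push_cast
  ring

lemma shadowSum_upShadowSum {s : Finset ι} (hs : s ⊆ S) (z : Finset ι → ℝ) :
    shadowSum (upShadowSum S z) s =
      s.card * z s + ∑ i ∈ s, ∑ j ∈ S \ s, z (insert j (s.erase i)) := by
  rw [shadowSum, card_eq_sum_ones, Nat.cast_sum, sum_mul, ← sum_add_distrib]
  refine sum_congr rfl fun i hi => ?_
  rw [upShadowSum, sdiff_erase (hs hi), sum_insert (by simp [hi]), insert_erase hi]
  simp

lemma upShadowSum_shadowSum (s : Finset ι) (z : Finset ι → ℝ) :
    upShadowSum S (shadowSum z) s =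
      (S \ s).card * z s + ∑ i ∈ s, ∑ j ∈ S \ s, z (insert j (s.erase i)) := by
  rw [sum_comm (s := s), card_eq_sum_ones, Nat.cast_sum, sum_mul, upShadowSum,
    ← sum_add_distrib]
  refine sum_congr rfl fun j hj => ?_
  have hjs : j ∉ s := (mem_sdiff.1 hj).2
  rw [shadowSum, sum_insert hjs, erase_insert hjs, Nat.cast_one, one_mul]
  congr 1
  exact sum_congr rfl fun i hi => by rw [erase_insert_of_ne (ne_of_mem_of_not_mem hi hjs).symm]

lemma sum_sq_shadowSum_eq (b : ℕ) (W : Finset ι → ℝ) :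
    ∑ t ∈ S.powersetCard (b + 2), shadowSum W t ^ 2 =
      ∑ s ∈ S.powersetCard b, upShadowSum S W s ^ 2 +
        (S.card - 2 * (b + 1)) * ∑ s ∈ S.powersetCard (b + 1), W s ^ 2 := by
  have hcomm : ∀ s ∈ S.powersetCard (b + 1),
      upShadowSum S (shadowSum W) s * W s =
        W s * shadowSum (upShadowSum S W) s + (S.card - 2 * (b + 1)) * W s ^ 2 := by
    intro s hs
    obtain ⟨hsS, hcard⟩ := mem_powersetCard.1 hs
    rw [upShadowSum_shadowSum, shadowSum_upShadowSum S hsS, card_sdiff_of_subset hsS, hcard,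
      Nat.cast_sub (hcard ▸ card_le_card hsS)]
    push_cast
    ring
  calc ∑ t ∈ S.powersetCard (b + 2), shadowSum W t ^ 2
      = ∑ s ∈ S.powersetCard (b + 1), upShadowSum S (shadowSum W) s * W s := by
        rw [sum_upShadowSum_mul]; simp only [sq]
    _ = _ := by
        rw [sum_congr rfl hcomm, sum_add_distrib, ← sum_upShadowSum_mul, mul_sum]
        simp only [sq]

lemma sum_sq_upShadowSum_le (a : ℕ) (v : Finset ι → ℝ)
    (hv : ∑ t ∈ S.powersetCard (a + 1), v t = 0) :
    ∑ s ∈ S.powersetCard a, upShadowSum S v s ^ 2 ≤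
      a * (S.card - a - 1) * ∑ t ∈ S.powersetCard (a + 1), v t ^ 2 := by
  induction a generalizing v with
  | zero =>
    have h := sum_upShadowSum S 0 v
    rw [hv, powersetCard_zero, sum_singleton, mul_zero] at h
    simp [powersetCard_zero, h]
  | succ b ih =>
    set W := upShadowSum S v
    set T := ∑ s ∈ S.powersetCard (b + 1), W s ^ 2
    set V := ∑ t ∈ S.powersetCard (b + 2), v t ^ 2
    have hW : ∑ s ∈ S.powersetCard (b + 1), W s = 0 := by
      rw [sum_upShadowSum, hv, mul_zero]
    have hUW : ∑ t ∈ S.powersetCard (b + 2), shadowSum W t ^ 2 ≤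
        (b + 1) * (S.card - (b + 1) - 1) * T := by
      rw [sum_sq_shadowSum_eq]
      linear_combination ih W hW
    have hT : T = ∑ t ∈ S.powersetCard (b + 2), v t * shadowSum W t := by
      rw [← sum_upShadowSum_mul]; simp only [T, W, sq]
    have hCS : T ^ 2 ≤ V * ∑ t ∈ S.powersetCard (b + 2), shadowSum W t ^ 2 :=
      hT ▸ sum_mul_sq_le_sq_mul_sq _ _ _
    push_cast
    rcases (S.powersetCard (b + 2)).eq_empty_or_nonempty with hempty | ⟨t, ht⟩
    · simp [T, V, hT, hempty]
    · have hc : (0 : ℝ) ≤ (b + 1) * (S.card - (b + 1) - 1) := by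
        have h := (mem_powersetCard.1 ht).2 ▸ card_le_card (mem_powersetCard.1 ht).1
        have h' : (b : ℝ) + 2 ≤ S.card := by exact_mod_cast h
        nlinarith
      have hV : 0 ≤ V := sum_nonneg fun _ _ => sq_nonneg _
      have hT0 : 0 ≤ T := sum_nonneg fun _ _ => sq_nonneg _
      rcases hT0.eq_or_lt with h0 | hpos
      · rw [← h0]; positivity
      · nlinarith [mul_le_mul_of_nonneg_left hUW hV]

def dirichletForm (a : ℕ) (u : Finset ι → ℝ) : ℝ :=
  ∑ t ∈ S.powersetCard a, ∑ i ∈ t, ∑ j ∈ S \ t, (u (insert j (t.erase i)) - u t) ^ 2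

lemma dirichletForm_succ (b : ℕ) (u : Finset ι → ℝ) :
    dirichletForm S (b + 1) u =
      2 * ((S.card - b) * (b + 1) * ∑ t ∈ S.powersetCard (b + 1), u t ^ 2 -
        ∑ s ∈ S.powersetCard b, upShadowSum S u s ^ 2) := by
  have hcompl : ∀ t ∈ S.powersetCard (b + 1), ∀ i ∈ t,
      ∑ j ∈ S \ t, (u (insert j (t.erase i)) - u t) ^ 2 =
        ∑ j ∈ S \ t.erase i, (u (insert j (t.erase i)) - u (insert i (t.erase i))) ^ 2 := by
    intro t ht i hi
    rw [sdiff_erase ((mem_powersetCard.1 ht).1 hi), sum_insert (by simp [hi]), insert_erase hi,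
      sub_self, sq, zero_mul, zero_add]
  -- group the exchanges `t ↦ t - i + j` by `s = t - i`: for fixed `s` this is Lagrange's identity
  rw [dirichletForm, sum_congr rfl fun t ht => sum_congr rfl (hcompl t ht),
    ← sum_powersetCard_sum_sdiff S b fun s i => ∑ j ∈ S \ s, (u (insert j s) - u (insert i s)) ^ 2,
    mul_assoc, ← sum_upShadowSum, mul_sum, ← sum_sub_distrib, mul_sum]
  refine sum_congr rfl fun s hs => ?_
  obtain ⟨hsS, hcard⟩ := mem_powersetCard.1 hs
  rw [sum_sum_sub_sq, card_sdiff_of_subset hsS, hcard, Nat.cast_sub (hcard ▸ card_le_card hsS),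
    upShadowSum, upShadowSum]

theorem two_mul_card_mul_sum_sq_le_dirichletForm (a : ℕ) (u : Finset ι → ℝ)
    (hu : ∑ t ∈ S.powersetCard a, u t = 0) :
    2 * S.card * ∑ t ∈ S.powersetCard a, u t ^ 2 ≤ dirichletForm S a u := by
  cases a with
  | zero =>
    rw [powersetCard_zero, sum_singleton] at hu
    simp [dirichletForm, hu]
  | succ b =>
    rw [dirichletForm_succ]
    have := sum_sq_upShadowSum_le S b u hu
    linear_combination 2 * this

end

lemma sum_sum_filter_lt_eq_sum_sum_sdiff {ι : Type*} [LinearOrder ι] {S t : Finset ι}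
    (ht : t ⊆ S) (φ : ι → ι → ℝ) (hsymm : ∀ i ∈ S, ∀ j ∈ S, φ i j = φ j i)
    (hsame : ∀ i ∈ S, ∀ j ∈ S, (i ∈ t ↔ j ∈ t) → φ i j = 0) :
    ∑ i ∈ S, ∑ j ∈ S with i < j, φ i j = ∑ i ∈ t, ∑ j ∈ S \ t, φ i j := by
  have hzero : ∀ i ∈ S, ∀ A ⊆ S, (∀ j ∈ A, (i ∈ t ↔ j ∈ t)) →
      ∑ j ∈ A, (if i < j then φ i j else 0) = 0 := fun i hi A hA hiff =>
    sum_eq_zero fun j hj => by rw [hsame i hi j (hA hj) (hiff j hj), ite_self]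
  calc ∑ i ∈ S, ∑ j ∈ S with i < j, φ i j
      = ∑ i ∈ S, ∑ j ∈ S, if i < j then φ i j else 0 := by simp only [sum_filter]
    _ = ∑ i ∈ t, ∑ j ∈ S \ t, (if i < j then φ i j else 0) +
          ∑ i ∈ S \ t, ∑ j ∈ t, (if i < j then φ i j else 0) := by
        rw [← sum_sdiff ht, add_comm]
        congr 1 <;> refine sum_congr rfl fun i hi => ?_ <;> rw [← sum_sdiff ht]
        · rw [hzero i (ht hi) t ht fun j hj => iff_of_true hi hj, add_zero]
        · have hi' := mem_sdiff.1 hi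
          rw [hzero i hi'.1 (S \ t) sdiff_subset fun j hj => iff_of_false hi'.2 (mem_sdiff.1 hj).2,
            zero_add]
    _ = ∑ i ∈ t, ∑ j ∈ S \ t, φ i j := by
        rw [sum_comm (s := S \ t), ← sum_add_distrib]
        refine sum_congr rfl fun i hi => ?_
        rw [← sum_add_distrib]
        refine sum_congr rfl fun j hj => ?_
        have hj' := mem_sdiff.1 hj
        rcases lt_or_gt_of_ne (ne_of_mem_of_not_mem hi hj'.2) with h | h
        · simp [h, h.not_gt]
        · simp [h, h.not_gt, hsymm j hj'.1 i (ht hi)]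

section
variable {n k : ℕ}

def ones (x : Slice n k) : Finset (Fin n) := {l | x.1 l}

lemma mem_ones {x : Slice n k} {l : Fin n} : l ∈ ones x ↔ x.1 l = true := by
  simp [ones]

lemma card_ones (x : Slice n k) : (ones x).card = k := by
  rw [ones, card_filter]; exact x.2

lemma ones_injective : Function.Injective (ones : Slice n k → Finset (Fin n)) := by
  intro x y h
  apply Subtype.ext
  funext l
  have := congrArg (l ∈ ·) h
  simp only [mem_ones, eq_iff_iff] at this
  exact Bool.eq_iff_iff.mpr this

lemma mem_ones_permAct {σ : Equiv.Perm (Fin n)} {x : Slice n k} {l : Fin n} :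
    l ∈ ones (permAct σ x) ↔ σ l ∈ ones x := by
  simp [mem_ones, permAct]

lemma permAct_swap_eq_self {x : Slice n k} {i j : Fin n} (h : x.1 i = x.1 j) :
    permAct (Equiv.swap i j) x = x := by
  apply Subtype.ext
  funext l
  simp only [permAct, Equiv.swap_apply_def]
  split_ifs with h₁ h₂
  · rw [h₁, h]
  · rw [h₂, h]
  · rfl

def ofFinset (A : Finset (Fin n)) (hA : A.card = k) : Slice n k :=
  ⟨fun l => decide (l ∈ A), by simpa [← card_filter] using hA⟩

lemma ones_ofFinset (A : Finset (Fin n)) (hA : A.card = k) : ones (ofFinset A hA) = A := by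
  ext l; simp [mem_ones, ofFinset]

lemma permAct_permAct (σ ρ : Equiv.Perm (Fin n)) (x : Slice n k) :
    permAct σ (permAct ρ x) = permAct (ρ * σ) x := rfl

lemma permAct_one (x : Slice n k) : permAct 1 x = x := rfl

-- intended for `t ∈ S.powersetCard (ones x₀ ∩ S).card`; otherwise `x₀` serves as a junk value
def glue (S : Finset (Fin n)) (x₀ : Slice n k) (t : Finset (Fin n)) : Slice n k :=
  if h : (t ∪ ones x₀ \ S).card = k then ofFinset _ h else x₀

variable {S : Finset (Fin n)}

lemma ones_glue {x₀ : Slice n k} {t : Finset (Fin n)}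
    (ht : t ∈ S.powersetCard (ones x₀ ∩ S).card) :
    ones (glue S x₀ t) = t ∪ ones x₀ \ S := by
  obtain ⟨htS, hcard⟩ := mem_powersetCard.1 ht
  have h : (t ∪ ones x₀ \ S).card = k := by
    rw [card_union_of_disjoint (disjoint_sdiff.mono_left htS), hcard, card_inter_add_card_sdiff,
      card_ones]
  rw [glue, dif_pos h, ones_ofFinset]

lemma sum_ones_sdiff_eq_sum_glue (x₀ : Slice n k) (G : Slice n k → ℝ) :
    ∑ x with ones x \ S = ones x₀ \ S, G x =
      ∑ t ∈ S.powersetCard (ones x₀ ∩ S).card, G (glue S x₀ t) := by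
  have hmem : ∀ x : Slice n k, ones x \ S = ones x₀ \ S →
      ones x ∩ S ∈ S.powersetCard (ones x₀ ∩ S).card := by
    intro x hx
    have h₁ := card_inter_add_card_sdiff (ones x) S
    have h₂ := card_inter_add_card_sdiff (ones x₀) S
    rw [card_ones, hx] at h₁
    rw [card_ones] at h₂
    exact mem_powersetCard.2 ⟨inter_subset_right, by omega⟩
  have hglue : ∀ x : Slice n k, ones x \ S = ones x₀ \ S → glue S x₀ (ones x ∩ S) = x := by
    intro x hx
    apply ones_injective
    rw [ones_glue (hmem x hx), ← hx, union_comm, sdiff_union_inter]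
  refine sum_nbij' (fun x => ones x ∩ S) (glue S x₀) ?_ ?_ ?_ ?_ ?_
  · intro x hx
    exact hmem x (mem_filter.1 hx).2
  · intro t ht
    simp only [mem_filter, mem_univ, true_and]
    rw [ones_glue ht, union_sdiff_distrib,
      sdiff_eq_empty_iff_subset.2 (mem_powersetCard.1 ht).1, empty_union, Finset.sdiff_idem]
  · intro x hx
    exact hglue x (mem_filter.1 hx).2
  · intro t ht
    rw [ones_glue ht, union_inter_distrib_right, inter_eq_left.2 (mem_powersetCard.1 ht).1,
      sdiff_inter_self, union_empty]
  · intro x hx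
    rw [hglue x (mem_filter.1 hx).2]

lemma glue_insert_erase {x₀ : Slice n k} {t : Finset (Fin n)}
    (ht : t ∈ S.powersetCard (ones x₀ ∩ S).card) {i j : Fin n} (hi : i ∈ t) (hj : j ∈ S \ t) :
    glue S x₀ (insert j (t.erase i)) = permAct (Equiv.swap i j) (glue S x₀ t) := by
  obtain ⟨htS, hcard⟩ := mem_powersetCard.1 ht
  obtain ⟨hjS, hjt⟩ := mem_sdiff.1 hj
  have hij : i ≠ j := ne_of_mem_of_not_mem hi hjt
  have ht' : insert j (t.erase i) ∈ S.powersetCard (ones x₀ ∩ S).card := by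
    refine mem_powersetCard.2 ⟨insert_subset hjS ((erase_subset _ _).trans htS), ?_⟩
    rw [card_insert_of_notMem (by simp [hjt]), card_erase_of_mem hi, hcard]
    have : 0 < (ones x₀ ∩ S).card := hcard ▸ card_pos.2 ⟨i, hi⟩
    omega
  apply ones_injective
  ext l
  rw [mem_ones_permAct, ones_glue ht, ones_glue ht']
  simp only [mem_union, mem_insert, mem_erase, mem_sdiff]
  by_cases hli : l = i
  · subst hli; simp [hij, hjt, htS hi, hjS]
  by_cases hlj : l = j
  · subst hlj; simp [hi, hjS]
  · rw [Equiv.swap_apply_of_ne_of_ne hli hlj]; simp [hli, hlj]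

lemma dirichletForm_comp_glue (G : Slice n k → ℝ) (x₀ : Slice n k) :
    dirichletForm S (ones x₀ ∩ S).card (fun t => G (glue S x₀ t)) =
      ∑ i ∈ S, ∑ j ∈ S with i < j, ∑ x with ones x \ S = ones x₀ \ S, sliceD i j G x ^ 2 := by
  have hpairs : ∀ t ∈ S.powersetCard (ones x₀ ∩ S).card,
      ∑ i ∈ t, ∑ j ∈ S \ t, (G (glue S x₀ (insert j (t.erase i))) - G (glue S x₀ t)) ^ 2 =
        ∑ i ∈ S, ∑ j ∈ S with i < j, sliceD i j G (glue S x₀ t) ^ 2 := by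
    intro t ht
    have hhead : ∀ i ∈ S, (glue S x₀ t).1 i = true ↔ i ∈ t := by
      intro i hi
      rw [← mem_ones, ones_glue ht]
      simp [hi]
    refine ((sum_sum_filter_lt_eq_sum_sum_sdiff (mem_powersetCard.1 ht).1 _ ?_ ?_).trans
      (sum_congr rfl fun i hi => sum_congr rfl fun j hj => ?_)).symm
    · intro i _ j _
      rw [sliceD, sliceD, Equiv.swap_comm]
    · intro i hi j hj hij
      rw [sliceD, permAct_swap_eq_self, sub_self, sq, zero_mul]
      rw [Bool.eq_iff_iff, hhead i hi, hhead j hj, hij]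
    · rw [sliceD, glue_insert_erase ht hi hj]
  rw [dirichletForm, sum_congr rfl hpairs,
    ← sum_ones_sdiff_eq_sum_glue x₀ fun x => ∑ i ∈ S, ∑ j ∈ S with i < j, sliceD i j G x ^ 2]
  exact sum_comm.trans (sum_congr rfl fun _ _ => sum_comm)

lemma sum_ones_sdiff_permAct (x₀ : Slice n k) (G : Slice n k → ℝ) {σ : Equiv.Perm (Fin n)}
    (hσ : ∀ l ∉ S, σ l = l) :
    ∑ x with ones x \ S = ones x₀ \ S, G (permAct σ x) =
      ∑ x with ones x \ S = ones x₀ \ S, G x := by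
  have htail : ∀ (τ : Equiv.Perm (Fin n)), (∀ l ∉ S, τ l = l) → ∀ x : Slice n k,
      ones (permAct τ x) \ S = ones x \ S := by
    intro τ hτ x
    ext l
    simp only [mem_sdiff, mem_ones_permAct]
    exact ⟨fun h => ⟨hτ l h.2 ▸ h.1, h.2⟩, fun h => ⟨(hτ l h.2).symm ▸ h.1, h.2⟩⟩
  have hσ' : ∀ l ∉ S, σ⁻¹ l = l := fun l hl => by rw [Equiv.Perm.inv_eq_iff_eq, hσ l hl]
  refine sum_nbij' (permAct σ) (permAct σ⁻¹) ?_ ?_ ?_ ?_ fun _ _ => rfl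
  · intro x hx
    simp only [mem_filter, mem_univ, true_and] at hx ⊢
    rw [htail σ hσ, hx]
  · intro x hx
    simp only [mem_filter, mem_univ, true_and] at hx ⊢
    rw [htail σ⁻¹ hσ', hx]
  · intro x _
    rw [permAct_permAct, mul_inv_cancel, permAct_one]
  · intro x _
    rw [permAct_permAct, inv_mul_cancel, permAct_one]

def firstCoords (n r : ℕ) : Finset (Fin n) := {l | (l : ℕ) < r}

lemma card_firstCoords (n r : ℕ) (hr : r ≤ n) : (firstCoords n r).card = r := by
  rw [firstCoords, Fin.card_filter_val_lt, min_eq_right hr]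

lemma card_filter_perm_fixing (r : ℕ) (hr : r ≤ n) :
    #{σ : Equiv.Perm (Fin n) | ∀ l : Fin n, r ≤ (l : ℕ) → σ l = l} = r.factorial := by
  rw [← Fintype.card_subtype,
    Fintype.card_congr ((Equiv.subtypeEquivRight fun σ => by simp only [not_lt]).trans
      (Equiv.Perm.subtypeEquivSubtypePerm fun l : Fin n => (l : ℕ) < r).symm),
    Fintype.card_perm, Fintype.card_subtype, Fin.card_filter_val_lt, min_eq_right hr]

lemma slicePiT_permAct (m : ℕ) (g : Slice n k → ℝ) {ρ : Equiv.Perm (Fin n)}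
    (hρ : ∀ l : Fin n, n - m ≤ (l : ℕ) → ρ l = l) (x : Slice n k) :
    slicePiT n k m g (permAct ρ x) = slicePiT n k m g x := by
  unfold slicePiT
  congr 1
  refine sum_equiv (Equiv.mulLeft ρ) (fun σ => ?_) fun σ _ => rfl
  simp only [mem_filter, mem_univ, true_and, Equiv.coe_mulLeft, Equiv.Perm.mul_apply]
  refine forall_congr' fun l => imp_congr_right fun hl => ?_
  rw [← hρ l hl, ρ.apply_eq_iff_eq, hρ l hl]

lemma sum_slicePiT_ones_sdiff (m : ℕ) (g : Slice n k → ℝ) (x₀ : Slice n k) :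
    ∑ x with ones x \ firstCoords n (n - m) = ones x₀ \ firstCoords n (n - m),
        slicePiT n k m g x =
      ∑ x with ones x \ firstCoords n (n - m) = ones x₀ \ firstCoords n (n - m), g x := by
  simp only [slicePiT, ← mul_sum]
  rw [sum_comm, sum_congr rfl fun σ hσ => sum_ones_sdiff_permAct x₀ g fun l hl => ?_, sum_const,
    card_filter_perm_fixing _ (Nat.sub_le n m), nsmul_eq_mul, ← mul_assoc,
    inv_mul_cancel₀ (by positivity), one_mul]
  simp only [firstCoords, mem_filter, mem_univ, true_and, not_lt] at hσ hl
  exact hσ l hl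

lemma sliceD_sub_slicePiT (m : ℕ) (g : Slice n k → ℝ) {i j : Fin n}
    (hi : i ∈ firstCoords n (n - m)) (hj : j ∈ firstCoords n (n - m)) :
    sliceD i j (fun x => g x - slicePiT n k m g x) = sliceD i j g := by
  have hfix : ∀ l : Fin n, n - m ≤ (l : ℕ) → Equiv.swap i j l = l := by
    intro l hl
    simp only [firstCoords, mem_filter, mem_univ, true_and] at hi hj
    exact Equiv.swap_apply_of_ne_of_ne (by rintro rfl; omega) (by rintro rfl; omega)
  funext x
  simp only [sliceD, slicePiT_permAct m g hfix]
  ring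

lemma two_mul_sum_ones_sdiff_sq_sub_slicePiT_le (m : ℕ) (g : Slice n k → ℝ) (x₀ : Slice n k) :
    2 * (n - m : ℕ) * ∑ x with ones x \ firstCoords n (n - m) = ones x₀ \ firstCoords n (n - m),
        (g x - slicePiT n k m g x) ^ 2 ≤
      ∑ i ∈ firstCoords n (n - m), ∑ j ∈ firstCoords n (n - m) with i < j,
        ∑ x with ones x \ firstCoords n (n - m) = ones x₀ \ firstCoords n (n - m),
          sliceD i j g x ^ 2 := by
  set S := firstCoords n (n - m)
  set F : Slice n k → ℝ := fun x => g x - slicePiT n k m g x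
  have hF : ∑ t ∈ S.powersetCard (ones x₀ ∩ S).card, F (glue S x₀ t) = 0 := by
    rw [← sum_ones_sdiff_eq_sum_glue x₀ F]
    simp only [F]
    rw [sum_sub_distrib, sum_slicePiT_ones_sdiff, sub_self]
  calc 2 * ((n - m : ℕ) : ℝ) * ∑ x with ones x \ S = ones x₀ \ S, F x ^ 2
      = 2 * S.card * ∑ t ∈ S.powersetCard (ones x₀ ∩ S).card, F (glue S x₀ t) ^ 2 := by
        rw [card_firstCoords n (n - m) (Nat.sub_le n m),
          sum_ones_sdiff_eq_sum_glue x₀ fun x => F x ^ 2]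
    _ ≤ dirichletForm S (ones x₀ ∩ S).card fun t => F (glue S x₀ t) :=
        two_mul_card_mul_sum_sq_le_dirichletForm S _ _ hF
    _ = ∑ i ∈ S, ∑ j ∈ S with i < j, ∑ x with ones x \ S = ones x₀ \ S, sliceD i j F x ^ 2 :=
        dirichletForm_comp_glue F x₀
    _ = _ := sum_congr rfl fun i hi => sum_congr rfl fun j hj => by
        rw [sliceD_sub_slicePiT m g hi (mem_filter.1 hj).1]

theorem two_mul_sliceL2sq_sub_slicePiT_le (m : ℕ) (g : Slice n k → ℝ) :
    2 * (n - m : ℕ) * sliceL2sq (fun x => g x - slicePiT n k m g x) ≤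
      ∑ i ∈ firstCoords n (n - m), ∑ j ∈ firstCoords n (n - m) with i < j,
        sliceL2sq (sliceD i j g) := by
  set S := firstCoords n (n - m)
  simp only [sliceL2sq, ← mul_sum]
  rw [mul_left_comm]
  gcongr
  calc 2 * ((n - m : ℕ) : ℝ) * ∑ x, (g x - slicePiT n k m g x) ^ 2
      = ∑ T, 2 * ((n - m : ℕ) : ℝ) * ∑ x with ones x \ S = T, (g x - slicePiT n k m g x) ^ 2 := by
        rw [← mul_sum, sum_fiberwise]
    _ ≤ ∑ T, ∑ i ∈ S, ∑ j ∈ S with i < j, ∑ x with ones x \ S = T, sliceD i j g x ^ 2 := by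
        refine sum_le_sum fun T _ => ?_
        rcases (univ.filter fun x : Slice n k => ones x \ S = T).eq_empty_or_nonempty with
          hT | ⟨x₀, hx₀⟩
        · simp [hT]
        · obtain rfl := (mem_filter.1 hx₀).2
          exact two_mul_sum_ones_sdiff_sq_sub_slicePiT_le m g x₀
    _ = ∑ i ∈ S, ∑ j ∈ S with i < j, ∑ x, sliceD i j g x ^ 2 :=
        sum_comm.trans (sum_congr rfl fun _ _ =>
          sum_comm.trans (sum_congr rfl fun _ _ => sum_fiberwise _ _ _))

lemma sum_sum_ite_lt_eq_sum_firstCoords (r : ℕ) (X : Fin n → Fin n → ℝ) :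
    ∑ i : Fin n, ∑ j : Fin n, (if i < j ∧ (j : ℕ) < r then X i j else 0) =
      ∑ i ∈ firstCoords n r, ∑ j ∈ firstCoords n r with i < j, X i j := by
  simp only [firstCoords, sum_filter]
  refine sum_congr rfl fun i _ => ?_
  by_cases hi : (i : ℕ) < r
  · rw [if_pos hi]
    refine sum_congr rfl fun j _ => ?_
    by_cases hj : (j : ℕ) < r <;> simp [hj, and_comm]
  · rw [if_neg hi]
    refine sum_eq_zero fun j _ => if_neg fun h => hi (lt_trans (Fin.lt_def.1 h.1) h.2)

end

theorem stmt8_general (n k m : ℕ) (hmn : m < n)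
    (f : Slice n k → ℝ) (t : ℝ) :
    sliceL2sq (fun x => sliceH n k t f x - slicePiT n k m (sliceH n k t f) x) ≤
      ((n - m : ℕ) : ℝ)⁻¹ *
        ∑ i : Fin n, ∑ j : Fin n,
          if i < j ∧ (j : ℕ) < n - m then sliceL2sq (sliceD i j (sliceH n k t f)) else 0 := by
  have hr : (0 : ℝ) < (n - m : ℕ) := by exact_mod_cast Nat.sub_pos_of_lt hmn
  have hL : 0 ≤ sliceL2sq (fun x => sliceH n k t f x - slicePiT n k m (sliceH n k t f) x) := by
    unfold sliceL2sq; positivity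
  rw [sum_sum_ite_lt_eq_sum_firstCoords, le_inv_mul_iff₀ hr]
  nlinarith [two_mul_sliceL2sq_sub_slicePiT_le m (sliceH n k t f)]

/-- Let `0 < k < n` and `1 ≤ m < n`. For every function `f` on the slice
`([n] choose k)` and every `t ≥ 0`,
`‖H_t f − Π_T H_t f‖²_{L²} ≤ (1/(n−m)) Σ_{1 ≤ i < j ≤ n−m} ‖D_{τ_{ij}}(H_t f)‖²_{L²}`,
where all norms are with respect to the uniform measure on the slice. (In the `0`-based
indexing of `Fin n`, the condition `1 ≤ i < j ≤ n−m` becomes `i < j` and `(j : ℕ) < n−m`.) -/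
theorem stmt8 (n k m : ℕ) (hk0 : 0 < k) (hkn : k < n) (hm1 : 1 ≤ m) (hmn : m < n)
    (f : Slice n k → ℝ) (t : ℝ) (ht : 0 ≤ t) :
    sliceL2sq (fun x => sliceH n k t f x - slicePiT n k m (sliceH n k t f) x) ≤
      ((n - m : ℕ) : ℝ)⁻¹ *
        ∑ i : Fin n, ∑ j : Fin n,
          if i < j ∧ (j : ℕ) < n - m then sliceL2sq (sliceD i j (sliceH n k t f)) else 0 :=
  stmt8_general n k m hmn f t
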